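/- Define x2 = x1, x4 = b + c + d + x1^2 - x3, x5 = bc + bd + cd - bx3 - cx3 - dx3 + x3^2 + x9, x6 = bc·x1 + bd·x1 + cd·x1 - b·x1·x3 - c·x1·x3 - d·x1·x3 + x1·x3^2 + x8 + x1·x9, x7 = -bcd + x1·x8 - b·x9 - c·x9 - d·x9 + x3·x9, where b, c, d, x1, x3, x8, x9 are arbitrary reals. Then the 6×6 matrix X with rows (x1, 1, 0, 0, 0, 0), (-x4, -x2, 1, 0, 0, 0), (0, 0, 0, 1, 0, 0), (0, 0, 0, 0, 1, 0), (-x6, -x5, 0, 0, 0, 1), (x7, x8, x9, 0, -x3, 0) has characteristic polynomial (t^2 + b)(t^2 + c)(t^2 + d). -/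

import Mathlib

open Polynomial Matrix
open scoped Classical

def hasSign {m : Type*} (P M : Matrix m m ℝ) : Prop :=
  ∀ i j, Real.sign (M i j) = P i j

def patT : Matrix (Fin 6) (Fin 6) ℝ :=
  !![1,1,0,0,0,0; -1,-1,1,0,0,0; 0,0,0,1,0,0; 0,0,0,0,1,0;
     -1,-1,0,0,0,1; 1,1,1,0,-1,0]

def patT' : Matrix (Fin 6) (Fin 6) ℝ :=
  !![1,1,0,0,0,0; -1,-1,1,0,0,0; 1,0,0,1,0,0; 0,0,0,0,1,0;
     -1,-1,0,0,0,1; 1,1,1,0,-1,0]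
def matX (x1 x2 x3 x4 x5 x6 x7 x8 x9 : ℝ) : Matrix (Fin 6) (Fin 6) ℝ :=
  !![x1, 1, 0, 0, 0, 0;
     -x4, -x2, 1, 0, 0, 0;
     0, 0, 0, 1, 0, 0;
     0, 0, 0, 0, 1, 0;
     -x6, -x5, 0, 0, 0, 1;
     x7, x8, x9, 0, -x3, 0]

/-!
Expanding `det (t • 1 - X)` along first rows gives the characteristic polynomial of `matX` as a
polynomial in its entries. Under the substitutions its odd coefficients vanish (as `x2 = x1`) and
its even ones become the elementary symmetric functions of `b`, `c`, `d`.
-/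

theorem charmatrix_matX (x1 x2 x3 x4 x5 x6 x7 x8 x9 : ℝ) :
    (matX x1 x2 x3 x4 x5 x6 x7 x8 x9).charmatrix =
      !![X - C x1, -1, 0, 0, 0, 0;
         C x4, X + C x2, -1, 0, 0, 0;
         0, 0, X, -1, 0, 0;
         0, 0, 0, X, -1, 0;
         C x6, C x5, 0, 0, X, -1;
         -C x7, -C x8, -C x9, 0, C x3, X] := by
  ext i j
  fin_cases i <;> fin_cases j <;> simp [matX]

theorem charpoly_matX (x1 x2 x3 x4 x5 x6 x7 x8 x9 : ℝ) :
    (matX x1 x2 x3 x4 x5 x6 x7 x8 x9).charpoly =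
      X ^ 6 + C (x2 - x1) * X ^ 5 + C (x3 + x4 - x1 * x2) * X ^ 4 + C ((x2 - x1) * x3) * X ^ 3 +
        C (x5 - x9 + x3 * x4 - x1 * x2 * x3) * X ^ 2 +
        C (x6 - x8 - x1 * x5 + (x1 - x2) * x9) * X + C (x1 * x2 * x9 + x1 * x8 - x4 * x9 - x7) := by
  rw [charpoly, charmatrix_matX]
  simp [det_succ_row_zero, Fin.sum_univ_succ, Fin.succAbove]
  ring

theorem stmt_7 (b c d x1 x3 x8 x9 : ℝ)
    (x2 x4 x5 x6 x7 : ℝ)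
    (hx2 : x2 = x1)
    (hx4 : x4 = b + c + d + x1 ^ 2 - x3)
    (hx5 : x5 = b * c + b * d + c * d - b * x3 - c * x3 - d * x3 + x3 ^ 2 + x9)
    (hx6 : x6 = b * c * x1 + b * d * x1 + c * d * x1 - b * x1 * x3 - c * x1 * x3 -
        d * x1 * x3 + x1 * x3 ^ 2 + x8 + x1 * x9)
    (hx7 : x7 = -(b * c * d) + x1 * x8 - b * x9 - c * x9 - d * x9 + x3 * x9) :
    (matX x1 x2 x3 x4 x5 x6 x7 x8 x9).charpoly =
      (X ^ 2 + C b) * (X ^ 2 + C c) * (X ^ 2 + C d) := by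
  subst hx2 hx4 hx5 hx6 hx7
  rw [charpoly_matX]
  simp only [map_add, map_sub, map_mul, map_neg, map_pow]
  ring
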